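/- An arbitrary subset M ⊆ 𝕋±^d is tropically convex if and only if for all p, q ∈ M the signed tropical convex hull tconv({p,q}) is contained in M. -/

import Mathlib

/-!  Signed tropical numbers 𝕋±, the symmetrized tropical semiring 𝕊,
     and signed tropical convexity (Loho–Végh). -/

inductive SSign : Type where
  | pos : SSign
  | neg : SSign
  | bal : SSign
deriving DecidableEq

/-- The symmetrized tropical semiring 𝕊: the tropical zero 𝟘 = -∞ together with
elements `elem s r` where `s` is a sign (⊕, ⊖ or •) and `r` a real number. -/
inductive STrop : Type where
  | zero : STrop
  | elem : SSign → ℝ → STrop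

namespace STrop

/-- membership in the signed tropical numbers 𝕋± (i.e. not balanced-nonzero). -/
def isSigned : STrop → Prop
  | elem SSign.bal _ => False
  | _ => True

/-- membership in 𝕋≥, the nonnegative tropical numbers. -/
def nneg : STrop → Prop
  | zero => True
  | elem SSign.pos _ => True
  | _ => False

/-- membership in 𝕋≤, the nonpositive tropical numbers. -/
def npos : STrop → Prop
  | zero => True
  | elem SSign.neg _ => True
  | _ => False

/-- strictly positive signed element (sign ⊕, not 𝟘). -/
def isPos : STrop → Prop
  | elem SSign.pos _ => True
  | _ => False

/-- balanced or 𝟘 (membership in 𝕋•). -/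
def balZero : STrop → Prop
  | zero => True
  | elem SSign.bal _ => True
  | _ => False

/-- the negation map ⊖. -/
def neg : STrop → STrop
  | zero => zero
  | elem SSign.pos r => elem SSign.neg r
  | elem SSign.neg r => elem SSign.pos r
  | elem SSign.bal r => elem SSign.bal r

/-- tropical addition ⊕ on 𝕊. -/
noncomputable def add : STrop → STrop → STrop
  | zero, y => y
  | x, zero => x
  | elem s r, elem t u =>
    if r < u then elem t u
    else if u < r then elem s r
    else if s = t then elem s r
    else elem SSign.bal r

def signMul : SSign → SSign → SSign
  | SSign.pos, t => t
  | SSign.neg, SSign.pos => SSign.neg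
  | SSign.neg, SSign.neg => SSign.pos
  | SSign.neg, SSign.bal => SSign.bal
  | SSign.bal, _ => SSign.bal

/-- tropical multiplication ⊙ on 𝕊. -/
def mul : STrop → STrop → STrop
  | zero, _ => zero
  | _, zero => zero
  | elem s r, elem t u => elem (signMul s t) (r + u)

/-- a ⊖ b := a ⊕ (⊖b). -/
noncomputable def sub (x y : STrop) : STrop := add x (neg y)

/-- the tropical one, the signed element ⊕0. -/
def one : STrop := elem SSign.pos 0

/-- the absolute value |·| : 𝕊 → 𝕋≥. -/
def absS : STrop → STrop
  | zero => zero
  | elem _ r => elem SSign.pos r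

/-- strict order: x > y iff x ⊖ y is a strictly positive signed element. -/
def sgt (x y : STrop) : Prop := isPos (sub x y)

/-- balance relation: x ⋈ y iff x ⊖ y is balanced or 𝟘. -/
def bal (x y : STrop) : Prop := balZero (sub x y)

/-- the relation ⊵ : x ⊵ y iff x > y or x ⋈ y. -/
def teq (x y : STrop) : Prop := sgt x y ∨ bal x y

/-- the total order ≤ on the signed tropical numbers 𝕋±
(arbitrarily `False` whenever a balanced element is involved). -/
def sle : STrop → STrop → Prop
  | zero, zero => True
  | zero, elem SSign.pos _ => True
  | elem SSign.neg _, zero => True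
  | elem SSign.neg _, elem SSign.pos _ => True
  | elem SSign.pos r, elem SSign.pos u => r ≤ u
  | elem SSign.neg r, elem SSign.neg u => u ≤ r
  | _, _ => False

/-- U(a): the set of signed numbers incomparable with a; the singleton {a}
for signed a, and the order interval [⊖|a|, |a|] for balanced a. -/
def U : STrop → Set STrop
  | elem SSign.bal r => {x | isSigned x ∧ sle (elem SSign.neg r) x ∧ sle x (elem SSign.pos r)}
  | a => {a}

/-- tropical sum of finitely many elements of 𝕊. -/
noncomputable def sumFin : ∀ {n : ℕ}, (Fin n → STrop) → STrop
  | 0, _ => zero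
  | _ + 1, f => add (f 0) (sumFin fun i => f i.succ)

/-- matrix–vector product A ⊙ x over 𝕊. -/
noncomputable def mv {d n : ℕ} (A : Fin d → Fin n → STrop) (x : Fin n → STrop) : Fin d → STrop :=
  fun i => sumFin fun j => mul (A i j) (x j)

/-- vectors in 𝕋±^d. -/
def isSignedVec {d : ℕ} (v : Fin d → STrop) : Prop := ∀ i, isSigned (v i)

/-- the signed tropical convex hull of the columns of a matrix A:
tconv(A) = {z ∈ 𝕋±^d : z ⋈ A⊙x for some x ∈ 𝕋≥^n with ⊕_j x_j = 0}. -/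
def tconv {d n : ℕ} (A : Fin d → Fin n → STrop) : Set (Fin d → STrop) :=
  {z | isSignedVec z ∧ ∃ x : Fin n → STrop,
    (∀ j, nneg (x j)) ∧ sumFin x = one ∧ ∀ i, bal (z i) (mv A x i)}

/-- the signed tropical convex hull of an arbitrary set: the union of the hulls
of all finite collections of points of M. -/
def tconvSet {d : ℕ} (M : Set (Fin d → STrop)) : Set (Fin d → STrop) :=
  ⋃ (n : ℕ) (A : Fin d → Fin n → STrop) (_ : ∀ j, (fun i => A i j) ∈ M), tconv A

/-- a set M ⊆ 𝕋±^d is tropically convex iff M = tconv(M). -/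
def TropConvex {d : ℕ} (M : Set (Fin d → STrop)) : Prop := M = tconvSet M

/-- evaluation a ⊙ (0, x₁, …, x_d)ᵀ of an affine functional. -/
noncomputable def affEval {d : ℕ} (a : Fin (d + 1) → STrop) (x : Fin d → STrop) : STrop :=
  sumFin fun j => mul (a j) ((Fin.cons one x : Fin (d + 1) → STrop) j)

/-- the open signed tropical halfspace H⁺(a) = {x ∈ 𝕋±^d : a⊙(0,x)ᵀ > 𝟘}. -/
def Hopen {d : ℕ} (a : Fin (d + 1) → STrop) : Set (Fin d → STrop) :=
  {x | isSignedVec x ∧ sgt (affEval a x) zero}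

/-- the closed signed tropical halfspace H̄⁺(a) = {x ∈ 𝕋±^d : a⊙(0,x)ᵀ ⊵ 𝟘}. -/
def Hclosed {d : ℕ} (a : Fin (d + 1) → STrop) : Set (Fin d → STrop) :=
  {x | isSignedVec x ∧ teq (affEval a x) zero}

/-- the non-negative kernel nnker(A). -/
def nnker {d n : ℕ} (A : Fin d → Fin n → STrop) : Set (Fin n → STrop) :=
  {x | (∀ j, nneg (x j)) ∧ x ≠ (fun _ => zero) ∧ ∀ i, balZero (mv A x i)}

/-- the open tropical cone sep(A) = {y ∈ 𝕋±^d : yᵀ⊙A > 𝟘 componentwise}. -/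
def sep {d : ℕ} {J : Type} (A : Fin d → J → STrop) : Set (Fin d → STrop) :=
  {y | isSignedVec y ∧ ∀ j, isPos (sumFin fun i => mul (y i) (A i j))}

end STrop

/-!
Induction on the number of generators. Write `z ⋈ a₀ ⊙ x₀ ⊕ S`, where `S` is the combination of the
remaining columns, with total weight `⊕m`. If some entries of `S` are balanced, replace `S` by a
signed vector `t ⋈ S` that still satisfies `z ⋈ a₀ ⊙ x₀ ⊕ t` (take the signed part of
`z ⊖ a₀ ⊙ x₀` there). Then `y = (-m) ⊙ t` lies in the hull of the remaining columns, hence in `M` by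
induction, and `z` lies on the segment `tconv(a₀, y)` with weights `(x₀, ⊕m)`.
-/

namespace STrop
open SSign

section Addition

@[simp] protected lemma zero_add (x : STrop) : add zero x = x := rfl

@[simp] protected lemma add_zero (x : STrop) : add x zero = x := by cases x <;> rfl

lemma elem_add_elem (s t : SSign) (r u : ℝ) : add (elem s r) (elem t u) =
    if r < u then elem t u else if u < r then elem s r else if s = t then elem s r
    else elem SSign.bal r := rfl

protected lemma add_assoc (x y z : STrop) : add (add x y) z = add x (add y z) := by
  cases x <;> cases y <;> cases z <;> simp only [STrop.zero_add, STrop.add_zero, elem_add_elem]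
  all_goals split_ifs <;> simp only [elem_add_elem] <;> split_ifs <;> simp_all <;> linarith

lemma eq_zero_of_add_eq_zero {x y : STrop} (h : add x y = zero) : x = zero ∧ y = zero := by
  rcases x with _ | ⟨s, r⟩ <;> rcases y with _ | ⟨t, u⟩
  · exact ⟨rfl, rfl⟩
  all_goals
    simp only [STrop.zero_add, STrop.add_zero, elem_add_elem] at h
    try split_ifs at h
    all_goals cases h

lemma neg_add (x y : STrop) : neg (add x y) = add (neg x) (neg y) := by
  rcases x with _ | ⟨s, r⟩ <;> rcases y with _ | ⟨t, u⟩
  · rfl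
  · rfl
  · exact (STrop.add_zero _).symm
  cases s <;> cases t <;> simp only [neg, elem_add_elem] <;> split_ifs <;> simp_all

lemma sub_add_eq_sub_sub (z x y : STrop) : sub z (add x y) = sub (sub z x) y := by
  rw [sub, sub, sub, neg_add, STrop.add_assoc]

lemma bal_self (x : STrop) : bal x x := by
  cases x with
  | zero => trivial
  | elem s r => cases s <;> simp [bal, sub, neg, elem_add_elem, balZero]

end Addition

lemma sumFin_succ {n : ℕ} (f : Fin (n + 1) → STrop) :
    sumFin f = add (f 0) (sumFin fun i => f i.succ) := rfl

lemma sumFin_eq_zero_iff {n : ℕ} {f : Fin n → STrop} :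
    sumFin f = zero ↔ ∀ j, f j = zero := by
  induction n with
  | zero => simp [sumFin]
  | succ n ih =>
    constructor
    · intro h j
      obtain ⟨h0, hs⟩ := eq_zero_of_add_eq_zero h
      cases j using Fin.cases with
      | zero => exact h0
      | succ i => exact ih.mp hs i
    · intro h
      rw [sumFin_succ, h 0, ih.mpr fun i => h i.succ]
      rfl

lemma mv_eq_zero_of_sumFin_eq_zero {d n : ℕ} (A : Fin d → Fin n → STrop) {x : Fin n → STrop}
    (hx : sumFin x = zero) (i : Fin d) : mv A x i = zero := by
  rw [sumFin_eq_zero_iff] at hx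
  exact sumFin_eq_zero_iff.mpr fun j => by rw [hx j]; cases A i j <;> rfl

section Multiplication

@[simp] protected lemma mul_zero (x : STrop) : mul x zero = zero := by cases x <;> rfl

protected lemma mul_comm (x y : STrop) : mul x y = mul y x := by
  rcases x with _ | ⟨s, r⟩ <;> rcases y with _ | ⟨t, u⟩ <;> try rfl
  cases s <;> cases t <;> simp only [mul, signMul, add_comm]

protected lemma one_mul (x : STrop) : mul one x = x := by
  rcases x with _ | ⟨s, r⟩
  · rfl
  · simp [one, mul, signMul]

lemma mul_pos_elem (a : ℝ) (s : SSign) (r : ℝ) : mul (elem pos a) (elem s r) = elem s (a + r) :=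
  rfl

lemma mul_pos_add (a : ℝ) (x y : STrop) :
    mul (elem pos a) (add x y) = add (mul (elem pos a) x) (mul (elem pos a) y) := by
  rcases x with _ | ⟨s, r⟩ <;> rcases y with _ | ⟨t, u⟩ <;> try rfl
  simp only [elem_add_elem, mul_pos_elem]
  split_ifs <;> first | rfl | (exfalso; linarith)

lemma mul_pos_mul_pos_neg (a : ℝ) (x : STrop) : mul (elem pos a) (mul (elem pos (-a)) x) = x := by
  rcases x with _ | ⟨s, r⟩
  · rfl
  · simp only [mul_pos_elem, add_neg_cancel_left]

lemma mul_mul_pos_left_comm (a : ℝ) (x y : STrop) :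
    mul x (mul (elem pos a) y) = mul (elem pos a) (mul x y) := by
  rcases x with _ | ⟨s, r⟩ <;> rcases y with _ | ⟨t, u⟩ <;> try rfl
  cases s <;> cases t <;> simp only [mul, signMul, elem.injEq, true_and] <;> ring

lemma neg_mul_pos (a : ℝ) (x : STrop) : neg (mul (elem pos a) x) = mul (elem pos a) (neg x) := by
  rcases x with _ | ⟨s, r⟩
  · rfl
  · cases s <;> rfl

lemma bal_mul_pos {x y : STrop} (a : ℝ) (h : bal x y) :
    bal (mul (elem pos a) x) (mul (elem pos a) y) := by
  unfold bal sub at *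
  rw [neg_mul_pos, ← mul_pos_add]
  generalize add x (neg y) = w at h
  rcases w with _ | ⟨s, r⟩
  · trivial
  · cases s <;> simp_all [balZero, mul_pos_elem]

lemma isSigned_mul_pos {x : STrop} (a : ℝ) (h : isSigned x) : isSigned (mul (elem pos a) x) := by
  rcases x with _ | ⟨s, r⟩
  · trivial
  · cases s <;> simp_all [isSigned, mul_pos_elem]

lemma nneg_mul_pos {x : STrop} (a : ℝ) (h : nneg x) : nneg (mul (elem pos a) x) := by
  rcases x with _ | ⟨s, r⟩
  · trivial
  · cases s <;> simp_all [nneg, mul_pos_elem]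

lemma sumFin_mul_pos {n : ℕ} (a : ℝ) (f : Fin n → STrop) :
    sumFin (fun j => mul (elem pos a) (f j)) = mul (elem pos a) (sumFin f) := by
  induction n with
  | zero => rfl
  | succ n ih => rw [sumFin_succ, sumFin_succ, ih, mul_pos_add]

lemma mv_mul_pos {d n : ℕ} (A : Fin d → Fin n → STrop) (a : ℝ) (x : Fin n → STrop)
    (i : Fin d) :
    mv A (fun j => mul (elem pos a) (x j)) i = mul (elem pos a) (mv A x i) := by
  simp only [mv, mul_mul_pos_left_comm, sumFin_mul_pos]

end Multiplication

section SignedRepresentative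

noncomputable def signedPart : STrop → STrop
  | elem SSign.pos s => elem SSign.pos s
  | elem SSign.neg s => elem SSign.neg s
  | _ => zero

lemma isSigned_signedPart (x : STrop) : isSigned (signedPart x) := by
  rcases x with _ | ⟨s, r⟩
  · trivial
  · cases s <;> trivial

lemma bal_signedPart (x : STrop) : bal x (signedPart x) := by
  rcases x with _ | ⟨s, r⟩
  · trivial
  · cases s <;> simp [signedPart, bal, sub, neg, elem_add_elem, balZero]

lemma bal_signedPart_of_bal_bal {x : STrop} {r : ℝ} (h : bal x (elem SSign.bal r)) :
    bal (signedPart x) (elem SSign.bal r) := by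
  rcases x with _ | ⟨s, u⟩
  · trivial
  · cases s <;> simp only [signedPart, bal, sub, neg, elem_add_elem, balZero] at h ⊢ <;>
      split_ifs at h ⊢ <;> simp_all

lemma exists_isSigned_bal_bal {x y : STrop} (h : bal x y) :
    ∃ t, isSigned t ∧ bal t y ∧ bal x t := by
  rcases y with _ | ⟨s, r⟩
  · exact ⟨zero, trivial, bal_self _, h⟩
  cases s
  case bal =>
    exact ⟨signedPart x, isSigned_signedPart x, bal_signedPart_of_bal_bal h, bal_signedPart x⟩
  all_goals exact ⟨_, by trivial, bal_self _, h⟩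

end SignedRepresentative

section Hull

variable {d : ℕ}

lemma nneg_add {x y : STrop} (hx : nneg x) (hy : nneg y) : nneg (add x y) := by
  rcases x with _ | ⟨s, r⟩ <;> rcases y with _ | ⟨t, u⟩ <;> try assumption
  obtain ⟨rfl, rfl⟩ : s = pos ∧ t = pos := by cases s <;> cases t <;> simp_all [nneg]
  rw [elem_add_elem]
  split_ifs <;> trivial

lemma nneg_sumFin {n : ℕ} {f : Fin n → STrop} (hf : ∀ j, nneg (f j)) : nneg (sumFin f) := by
  induction n with
  | zero => trivial
  | succ n ih => exact nneg_add (hf 0) (ih fun j => hf j.succ)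

lemma bal_add_iff {z x y : STrop} : bal z (add x y) ↔ bal (sub z x) y := by
  rw [bal, bal, sub_add_eq_sub_sub]

lemma mem_tconv_column {p : Fin d → STrop} (hp : isSignedVec p) :
    p ∈ tconv (fun i (_ : Fin 1) => p i) := by
  refine ⟨hp, fun _ => one, fun _ => trivial, rfl, fun i => ?_⟩
  show bal (p i) (add (mul (p i) one) zero)
  rw [STrop.add_zero, STrop.mul_comm, STrop.one_mul]
  exact bal_self _

lemma mem_tconv_pair {p q z : Fin d → STrop} {a b : STrop} (hz : isSignedVec z)
    (ha : nneg a) (hb : nneg b) (hab : add a b = one)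
    (hbal : ∀ i, bal (z i) (add (mul (p i) a) (mul (q i) b))) :
    z ∈ tconv (fun i => ![p i, q i]) := by
  refine ⟨hz, ![a, b], fun j => ?_, ?_, fun i => ?_⟩
  · fin_cases j <;> assumption
  · simpa [sumFin] using hab
  · simpa [mv, sumFin] using hbal i

lemma mem_tconv_of_sumFin_eq {n : ℕ} {A : Fin d → Fin n → STrop} {z : Fin d → STrop}
    {x : Fin n → STrop} {m : ℝ} (hz : isSignedVec z) (hx : ∀ j, nneg (x j))
    (hsum : sumFin x = elem pos m) (hbal : ∀ i, bal (z i) (mv A x i)) :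
    (fun i => mul (elem pos (-m)) (z i)) ∈ tconv A := by
  refine ⟨fun i => isSigned_mul_pos _ (hz i), fun j => mul (elem pos (-m)) (x j),
    fun j => nneg_mul_pos _ (hx j), ?_, fun i => ?_⟩
  · rw [sumFin_mul_pos, hsum, mul_pos_elem, neg_add_cancel]
    rfl
  · rw [mv_mul_pos]
    exact bal_mul_pos _ (hbal i)

lemma mem_tconv_succ_cases {n : ℕ} {A : Fin d → Fin (n + 1) → STrop}
    {z : Fin d → STrop} (hz : z ∈ tconv A) :
    z ∈ tconv (fun i => ![A i 0, A i 0]) ∨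
      ∃ y ∈ tconv (fun i j => A i j.succ), z ∈ tconv (fun i => ![A i 0, y i]) := by
  obtain ⟨hzs, x, hx, hsum, hbal⟩ := hz
  rw [sumFin_succ] at hsum
  set x' : Fin n → STrop := fun j => x j.succ
  have hbal' : ∀ i, bal (z i) (add (mul (A i 0) (x 0)) (mv (fun i j => A i j.succ) x' i)) := hbal
  rcases h : sumFin x' with _ | ⟨s, m⟩
  · left
    refine mem_tconv_pair hzs (hx 0) (b := zero) trivial (by rwa [h] at hsum) fun i => ?_
    simpa [mv_eq_zero_of_sumFin_eq_zero _ h] using hbal' i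
  obtain rfl : s = pos := by
    have := nneg_sumFin fun j => hx j.succ
    rw [h] at this
    cases s <;> first | rfl | exact this.elim
  right
  choose t ht using fun i => exists_isSigned_bal_bal (bal_add_iff.mp (hbal' i))
  refine ⟨_, mem_tconv_of_sumFin_eq (fun i => (ht i).1) (fun j => hx j.succ) h
    fun i => (ht i).2.1,
    mem_tconv_pair hzs (hx 0) (b := elem pos m) trivial (by rwa [h] at hsum) fun i => ?_⟩
  rw [STrop.mul_comm (mul _ (t i)), mul_pos_mul_pos_neg]
  exact bal_add_iff.mpr (ht i).2.2

lemma tconv_subset_of_forall_tconv_pair_subset {M : Set (Fin d → STrop)}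
    (hM : ∀ p ∈ M, ∀ q ∈ M, tconv (fun i => ![p i, q i]) ⊆ M) :
    ∀ {n : ℕ} (A : Fin d → Fin n → STrop), (∀ j, (fun i => A i j) ∈ M) → tconv A ⊆ M
  | 0, _, _, _, ⟨_, _, _, hsum, _⟩ => nomatch hsum
  | _ + 1, A, hA, _, hz => by
    rcases mem_tconv_succ_cases hz with h | ⟨y, hy, h⟩
    · exact hM _ (hA 0) _ (hA 0) h
    · have hyM := tconv_subset_of_forall_tconv_pair_subset hM _ (fun j => hA j.succ) hy
      exact hM _ (hA 0) y hyM h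

lemma tconv_subset_tconvSet {M : Set (Fin d → STrop)} {n : ℕ} {A : Fin d → Fin n → STrop}
    (hA : ∀ j, (fun i => A i j) ∈ M) : tconv A ⊆ tconvSet M :=
  fun _ hz => Set.mem_iUnion.mpr ⟨n, Set.mem_iUnion₂.mpr ⟨A, hA, hz⟩⟩

lemma tconvSet_subset_iff {M N : Set (Fin d → STrop)} :
    tconvSet M ⊆ N ↔
      ∀ n (A : Fin d → Fin n → STrop), (∀ j, (fun i => A i j) ∈ M) → tconv A ⊆ N := by
  simp only [tconvSet, Set.iUnion_subset_iff]

lemma subset_tconvSet {M : Set (Fin d → STrop)} (hM : ∀ v ∈ M, isSignedVec v) :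
    M ⊆ tconvSet M :=
  fun p hp => tconv_subset_tconvSet (A := fun i (_ : Fin 1) => p i) (fun _ => hp)
    (mem_tconv_column (hM p hp))

end Hull

end STrop

/-- a subset M ⊆ 𝕋±^d is tropically convex iff it contains the
signed tropical convex hull of each pair of its points. -/
theorem generation_by_line_segments (d : ℕ) (M : Set (Fin d → STrop))
    (hM : ∀ v ∈ M, STrop.isSignedVec v) :
    STrop.TropConvex M ↔
      ∀ p ∈ M, ∀ q ∈ M, STrop.tconv (fun i => ![p i, q i]) ⊆ M := by
  constructor
  · intro hconv p hp q hq
    rw [hconv]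
    exact STrop.tconv_subset_tconvSet (Fin.forall_fin_two.mpr ⟨hp, hq⟩)
  · intro hpair
    exact (STrop.subset_tconvSet hM).antisymm
      (STrop.tconvSet_subset_iff.mpr fun _ =>
        STrop.tconv_subset_of_forall_tconv_pair_subset hpair)
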